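/- Let T be a bounded normal operator on a Hilbert space that is quasi-m-isometric for some m ∈ ℕ. Then σ(T*T) ⊆ {0, 1}, and hence |λ| ∈ {0,1} for every λ ∈ σ(T). -/

import Mathlib

/-!
For a normal `T` the powers `T*^k T^k` are the powers of `A = T*T`, so the quasi-`m`-isometry
condition is the binomial expansion of `A (A - 1)^m = 0`. By spectral mapping for polynomials,
`σ(A)` lies in the zero set `{0, 1}` of `X (X - 1)^m`; by spectral mapping for the continuous
functional calculus of the normal `T`, `σ(A) = {|λ|^2 : λ ∈ σ(T)}`.
-/

open ContinuousLinearMap Finset Polynomial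

section

variable {R A : Type*} [CommRing R] [Ring A] [Algebra R A]

theorem mul_sub_one_pow_eq_sum (a : A) (m : ℕ) :
    a * (a - 1) ^ m = ∑ k ∈ range (m + 1), ((-1 : R) ^ (m - k) * m.choose k) • a ^ (k + 1) := by
  rw [sub_eq_add_neg, (Commute.one_right a).neg_right.add_pow, mul_sum]
  refine sum_congr rfl fun k _ => ?_
  rw [mul_assoc (a ^ k), ← mul_assoc, ← pow_succ', Algebra.smul_def, Algebra.commutes]
  simp only [map_mul, map_pow, map_neg, map_one, map_natCast]

variable (R) [StarRing A]

def IsQuasiIsometry (m : ℕ) (a : A) : Prop :=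
  ∑ k ∈ range (m + 1), ((-1 : R) ^ (m - k) * m.choose k) • (star a ^ (k + 1) * a ^ (k + 1)) = 0

variable {R}

theorem IsStarNormal.isQuasiIsometry_iff {a : A} (ha : IsStarNormal a) (m : ℕ) :
    IsQuasiIsometry R m a ↔ star a * a * (star a * a - 1) ^ m = 0 := by
  simp only [IsQuasiIsometry, mul_sub_one_pow_eq_sum (R := R), ha.star_comm_self.mul_pow]

end

theorem spectrum_subset_zero_one_of_mul_sub_one_pow_eq_zero (𝕜 : Type*) {A : Type*} [Field 𝕜]
    [Ring A] [Algebra 𝕜 A] {a : A} {m : ℕ} (h : a * (a - 1) ^ m = 0) :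
    spectrum 𝕜 a ⊆ {0, 1} := by
  nontriviality A
  refine Set.image_subset_iff.mp (spectrum.subset_polynomial_aeval a (X * (X - 1) ^ m)) |>.trans
    fun μ hμ => ?_
  simp only [Set.mem_preimage, eval_mul, eval_X, eval_pow, eval_sub, eval_one, map_mul, map_pow,
    map_sub, aeval_X, map_one, h, spectrum.zero_eq, Set.mem_singleton_iff, mul_eq_zero] at hμ
  exact hμ.imp_right fun h1 => sub_eq_zero.mp (pow_eq_zero_iff'.mp h1).1

theorem IsQuasiIsometry.spectrum_star_mul_self_subset {𝕜 A : Type*} [Field 𝕜] [Ring A]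
    [StarRing A] [Algebra 𝕜 A] {a : A} [ha : IsStarNormal a] {m : ℕ}
    (h : IsQuasiIsometry 𝕜 m a) : spectrum 𝕜 (star a * a) ⊆ {0, 1} :=
  spectrum_subset_zero_one_of_mul_sub_one_pow_eq_zero 𝕜 ((ha.isQuasiIsometry_iff m).mp h)

theorem IsStarNormal.sq_norm_mem_spectrum_star_mul_self {A : Type*} [CStarAlgebra A] {a : A}
    [IsStarNormal a] {z : ℂ} (hz : z ∈ spectrum ℂ a) :
    ((‖z‖ ^ 2 : ℝ) : ℂ) ∈ spectrum ℂ (star a * a) := by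
  have hcfc : cfc (fun w : ℂ => star w * w) a = star a * a := by
    rw [cfc_mul (fun w : ℂ => star w) (fun w : ℂ => w) a, cfc_star (fun w : ℂ => w) a, cfc_id' ℂ a]
  rw [← hcfc, cfc_map_spectrum (fun w : ℂ => star w * w) a]
  exact ⟨z, hz, by simp [Complex.conj_mul']⟩

theorem IsQuasiIsometry.norm_eq_zero_or_one_of_mem_spectrum {A : Type*} [CStarAlgebra A] {a : A}
    [IsStarNormal a] {m : ℕ} (h : IsQuasiIsometry ℂ m a) {z : ℂ} (hz : z ∈ spectrum ℂ a) :
    ‖z‖ = 0 ∨ ‖z‖ = 1 := by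
  have hsq := h.spectrum_star_mul_self_subset (IsStarNormal.sq_norm_mem_spectrum_star_mul_self hz)
  simp only [Set.mem_insert_iff, Set.mem_singleton_iff, Complex.ofReal_eq_zero,
    Complex.ofReal_eq_one] at hsq
  rwa [sq_eq_zero_iff, pow_eq_one_iff_of_nonneg (norm_nonneg z) two_ne_zero] at hsq

theorem stmt_16_general {H : Type*} [NormedAddCommGroup H] [InnerProductSpace ℂ H] [CompleteSpace H]
    (T : H →L[ℂ] H) (hnormal : adjoint T * T = T * adjoint T) (m : ℕ)
    (hqm : ∑ k ∈ range (m + 1),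
      ((-1 : ℂ) ^ (m - k) * (m.choose k : ℂ)) • ((adjoint T) ^ (k + 1) * T ^ (k + 1)) = 0) :
    spectrum ℂ (adjoint T * T) ⊆ {0, 1} ∧
      ∀ lam ∈ spectrum ℂ T, ‖lam‖ = 0 ∨ ‖lam‖ = 1 := by
  have : IsStarNormal T := ⟨by rwa [star_eq_adjoint]⟩
  have hT : IsQuasiIsometry ℂ m T := by rwa [IsQuasiIsometry, star_eq_adjoint]
  refine ⟨?_, fun _ => hT.norm_eq_zero_or_one_of_mem_spectrum⟩
  simpa only [star_eq_adjoint] using hT.spectrum_star_mul_self_subset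

/-- For a bounded normal quasi-m-isometric operator T, σ(T*T) ⊆ {0,1}, and hence
|λ| ∈ {0,1} for every λ ∈ σ(T). -/
theorem stmt_16 {H : Type*} [NormedAddCommGroup H] [InnerProductSpace ℂ H] [CompleteSpace H]
    (T : H →L[ℂ] H) (hnormal : adjoint T * T = T * adjoint T) (m : ℕ) (hm : 1 ≤ m)
    (hqm : ∑ k ∈ range (m + 1),
      ((-1 : ℂ) ^ (m - k) * (m.choose k : ℂ)) • ((adjoint T) ^ (k + 1) * T ^ (k + 1)) = 0) :
    spectrum ℂ (adjoint T * T) ⊆ {0, 1} ∧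
      ∀ lam ∈ spectrum ℂ T, ‖lam‖ = 0 ∨ ‖lam‖ = 1 :=
  stmt_16_general T hnormal m hqm
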